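/- arXiv:1510.08291 — 2 statements merged into one kernel-verified Lean document; each statement's English description precedes it below -/
import Mathlib

section
/- If the pair (Φ*, A*) ∈ ℝ^{p×M} × ℝ^{M×K} is a global minimizer of F(Φ, A) := ‖X − Φ·A‖_F² + λ·Σ_{m=1}^M n_Φ(Φ_m)·n_A((A_{m,:})ᵀ) over all Φ ∈ ℝ^{p×M} and A ∈ ℝ^{M×K}, then Z* := Φ*·A* is a global minimizer of G(Z) := ‖X − Z‖_F² + λ·ψ^M(Z) (with values in ℝ≥0∞) over all Z ∈ ℝ^{p×K}. -/
open scoped ENNReal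

/-!
The fit term `‖X − Φ A‖²` depends on `(Φ, A)` only through `Z = Φ A`, so `G(Z)` is the
infimum of `F` over the fibre `{Φ A = Z}`. Each point of that fibre has `F ≥ F(Φ*, A*)`, and
`F(Φ*, A*) ≥ G(Z*)` because `(Φ*, A*)` lies in the fibre over `Z*`. The only care needed is
in `ℝ≥0∞`: the penalty at the minimizer is nonnegative (a seminorm is), and multiplying by
`λ > 0` commutes with the infimum even when the fibre is empty.
-/

/-- The function `ψ^M(Z)`: the infimum of `∑_{m=1}^M n_Φ(Φ_m) · n_A((A_{m,:})ᵀ)`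
over all factorisations `Φ · A = Z` with `Φ ∈ ℝ^{p×M}` and `A ∈ ℝ^{M×K}`
(the infimum over the empty set being `+∞`). -/
noncomputable def psi (p K : ℕ) (nPhi : (Fin p → ℝ) → ℝ) (nA : (Fin K → ℝ) → ℝ)
    (M : ℕ) (Z : Matrix (Fin p) (Fin K) ℝ) : ℝ≥0∞ :=
  ⨅ (Φ : Matrix (Fin p) (Fin M) ℝ) (A : Matrix (Fin M) (Fin K) ℝ) (_ : Φ * A = Z),
    ENNReal.ofReal (∑ m : Fin M, nPhi (fun i => Φ i m) * nA (fun k => A m k))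

theorem minimizer_of_lifted_minimizer {α β : Type*} (f : α → β) (e : β → ℝ) (g : α → ℝ)
    {lam : ℝ} (hlam : 0 < lam) {x₀ : α} (he : 0 ≤ e (f x₀)) (hg : 0 ≤ g x₀)
    (hmin : ∀ x, e (f x₀) + lam * g x₀ ≤ e (f x) + lam * g x) (z : β) :
    ENNReal.ofReal (e (f x₀)) + ENNReal.ofReal lam * ⨅ (x) (_ : f x = f x₀), ENNReal.ofReal (g x)
      ≤ ENNReal.ofReal (e z) + ENNReal.ofReal lam * ⨅ (x) (_ : f x = z), ENNReal.ofReal (g x) := by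
  have hlam₀ : ENNReal.ofReal lam ≠ 0 := by simpa using hlam
  calc _ ≤ ENNReal.ofReal (e (f x₀)) + ENNReal.ofReal lam * ENNReal.ofReal (g x₀) := by
        gcongr; exact iInf_le_of_le x₀ (iInf_le _ rfl)
    _ = ENNReal.ofReal (e (f x₀) + lam * g x₀) := by
        rw [ENNReal.ofReal_add he (by positivity), ENNReal.ofReal_mul hlam.le]
    _ ≤ _ := by
        simp only [ENNReal.mul_iInf_of_ne hlam₀ ENNReal.ofReal_ne_top, ENNReal.add_iInf]
        refine le_iInf₂ fun x hx => hx ▸ ?_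
        calc ENNReal.ofReal (e (f x₀) + lam * g x₀) ≤ ENNReal.ofReal (e (f x) + lam * g x) :=
              ENNReal.ofReal_le_ofReal (hmin x)
          _ ≤ ENNReal.ofReal (e (f x)) + ENNReal.ofReal lam * ENNReal.ofReal (g x) := by
              rw [← ENNReal.ofReal_mul hlam.le]; exact ENNReal.ofReal_add_le

theorem factorized_min_gives_psi_min_general (p K M : ℕ)
    (nPhi : (Fin p → ℝ) → ℝ) (nA : (Fin K → ℝ) → ℝ)
    (hPhi_add : ∀ x y, nPhi (x + y) ≤ nPhi x + nPhi y)
    (hPhi_smul : ∀ (c : ℝ) (x), nPhi (c • x) = |c| * nPhi x)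
    (hA_add : ∀ x y, nA (x + y) ≤ nA x + nA y)
    (hA_smul : ∀ (c : ℝ) (x), nA (c • x) = |c| * nA x)
    (X : Matrix (Fin p) (Fin K) ℝ) (lam : ℝ) (hlam : 0 < lam)
    (Φs : Matrix (Fin p) (Fin M) ℝ) (As : Matrix (Fin M) (Fin K) ℝ)
    (hmin : ∀ (Φ : Matrix (Fin p) (Fin M) ℝ) (A : Matrix (Fin M) (Fin K) ℝ),
      (∑ i, ∑ k, (X i k - (Φs * As) i k) ^ 2) +
          lam * ∑ m : Fin M, nPhi (fun i => Φs i m) * nA (fun k => As m k) ≤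
        (∑ i, ∑ k, (X i k - (Φ * A) i k) ^ 2) +
          lam * ∑ m : Fin M, nPhi (fun i => Φ i m) * nA (fun k => A m k)) :
    ∀ Z : Matrix (Fin p) (Fin K) ℝ,
      ENNReal.ofReal (∑ i, ∑ k, (X i k - (Φs * As) i k) ^ 2) +
          ENNReal.ofReal lam * psi p K nPhi nA M (Φs * As) ≤
        ENNReal.ofReal (∑ i, ∑ k, (X i k - Z i k) ^ 2) +
          ENNReal.ofReal lam * psi p K nPhi nA M Z := by
  intro Z
  let seminormPhi : Seminorm ℝ (Fin p → ℝ) :=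
    .of nPhi hPhi_add fun c x => by rw [hPhi_smul, Real.norm_eq_abs]
  let seminormA : Seminorm ℝ (Fin K → ℝ) :=
    .of nA hA_add fun c x => by rw [hA_smul, Real.norm_eq_abs]
  have hpenalty : 0 ≤ ∑ m : Fin M, nPhi (fun i => Φs i m) * nA (fun k => As m k) :=
    Finset.sum_nonneg fun m _ => mul_nonneg (apply_nonneg seminormPhi _) (apply_nonneg seminormA _)
  simpa only [psi, iInf_prod] using
    minimizer_of_lifted_minimizer (fun x : Matrix _ _ ℝ × Matrix _ _ ℝ => x.1 * x.2)
      (fun W => ∑ i, ∑ k, (X i k - W i k) ^ 2)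
      (fun x => ∑ m : Fin M, nPhi (fun i => x.1 i m) * nA (fun k => x.2 m k))
      hlam (x₀ := (Φs, As)) (by positivity) hpenalty (fun x => hmin x.1 x.2) Z

/-- If `(Φ*, A*)` is a global minimizer of
`F(Φ, A) = ‖X − ΦA‖_F² + λ·∑_m n_Φ(Φ_m)·n_A((A_{m,:})ᵀ)`, then `Z* = Φ*·A*` is a global
minimizer of `G(Z) = ‖X − Z‖_F² + λ·ψ^M(Z)`. -/
theorem factorized_min_gives_psi_min (p K M : ℕ)
    (nPhi : (Fin p → ℝ) → ℝ) (nA : (Fin K → ℝ) → ℝ)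
    (hPhi_add : ∀ x y, nPhi (x + y) ≤ nPhi x + nPhi y)
    (hPhi_smul : ∀ (c : ℝ) (x), nPhi (c • x) = |c| * nPhi x)
    (hPhi_def : ∀ x, nPhi x = 0 ↔ x = 0)
    (hA_add : ∀ x y, nA (x + y) ≤ nA x + nA y)
    (hA_smul : ∀ (c : ℝ) (x), nA (c • x) = |c| * nA x)
    (hA_def : ∀ x, nA x = 0 ↔ x = 0)
    (X : Matrix (Fin p) (Fin K) ℝ) (lam : ℝ) (hlam : 0 < lam)
    (Φs : Matrix (Fin p) (Fin M) ℝ) (As : Matrix (Fin M) (Fin K) ℝ)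
    (hmin : ∀ (Φ : Matrix (Fin p) (Fin M) ℝ) (A : Matrix (Fin M) (Fin K) ℝ),
      (∑ i, ∑ k, (X i k - (Φs * As) i k) ^ 2) +
          lam * ∑ m : Fin M, nPhi (fun i => Φs i m) * nA (fun k => As m k) ≤
        (∑ i, ∑ k, (X i k - (Φ * A) i k) ^ 2) +
          lam * ∑ m : Fin M, nPhi (fun i => Φ i m) * nA (fun k => A m k)) :
    ∀ Z : Matrix (Fin p) (Fin K) ℝ,
      ENNReal.ofReal (∑ i, ∑ k, (X i k - (Φs * As) i k) ^ 2) +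
          ENNReal.ofReal lam * psi p K nPhi nA M (Φs * As) ≤
        ENNReal.ofReal (∑ i, ∑ k, (X i k - Z i k) ^ 2) +
          ENNReal.ofReal lam * psi p K nPhi nA M Z :=
  factorized_min_gives_psi_min_general p K M nPhi nA hPhi_add hPhi_smul hA_add hA_smul X lam hlam Φs
    As hmin
end

section
/- If Z* ∈ ℝ^{p×K} is a global minimizer of G(Z) := ‖X − Z‖_F² + λ·ψ^M(Z) over all Z ∈ ℝ^{p×K}, and (Φ, A) ∈ ℝ^{p×M} × ℝ^{M×K} satisfies Φ·A = Z* and Σ_{m=1}^M n_Φ(Φ_m)·n_A((A_{m,:})ᵀ) = ψ^M(Z*), then (Φ, A) is a global minimizer of F(Φ', A') := ‖X − Φ'·A'‖_F² + λ·Σ_{m=1}^M n_Φ(Φ'_m)·n_A((A'_{m,:})ᵀ) over all Φ' ∈ ℝ^{p×M} and A' ∈ ℝ^{M×K}. -/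
/-!
`F(Φ, A) = G(Φ A)` because `(Φ, A)` attains `ψ^M(Φ A)`, while `G(Φ' A') ≤ F(Φ', A')` for every
pair since `(Φ', A')` competes in the infimum defining `ψ^M(Φ' A')`; minimality of `Z* = Φ A` for
`G` closes the chain. Comparing in `ℝ≥0∞` loses nothing because the costs are nonnegative, which
follows from subadditivity and absolute homogeneity alone.
-/

open scoped ENNReal

theorem nonneg_of_subadditive_of_abs_smul {E : Type*} [AddCommGroup E] [Module ℝ E]
    {f : E → ℝ} (hadd : ∀ x y, f (x + y) ≤ f x + f y)
    (hsmul : ∀ (c : ℝ) (x), f (c • x) = |c| * f x) (x : E) : 0 ≤ f x :=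
  apply_nonneg (Seminorm.of f hadd fun c x => by rw [hsmul, Real.norm_eq_abs]) x

theorem ENNReal.le_of_ofReal_add_mul_le {a b c d l : ℝ} (ha : 0 ≤ a) (hb : 0 ≤ b)
    (hc : 0 ≤ c) (hd : 0 ≤ d) (hl : 0 ≤ l)
    (h : ENNReal.ofReal a + ENNReal.ofReal l * ENNReal.ofReal b ≤
      ENNReal.ofReal c + ENNReal.ofReal l * ENNReal.ofReal d) :
    a + l * b ≤ c + l * d := by
  rw [← ENNReal.ofReal_mul hl, ← ENNReal.ofReal_mul hl, ← ENNReal.ofReal_add ha (by positivity),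
    ← ENNReal.ofReal_add hc (by positivity)] at h
  exact (ENNReal.ofReal_le_ofReal_iff (by positivity)).1 h

section Factorization

variable {p K M : ℕ} (nPhi : (Fin p → ℝ) → ℝ) (nA : (Fin K → ℝ) → ℝ)

noncomputable def factorCost (Φ : Matrix (Fin p) (Fin M) ℝ) (A : Matrix (Fin M) (Fin K) ℝ) : ℝ :=
  ∑ m, nPhi (fun i => Φ i m) * nA (fun k => A m k)

variable {nPhi nA}

theorem factorCost_nonneg (hPhi : ∀ x, 0 ≤ nPhi x) (hA : ∀ x, 0 ≤ nA x)
    (Φ : Matrix (Fin p) (Fin M) ℝ) (A : Matrix (Fin M) (Fin K) ℝ) :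
    0 ≤ factorCost nPhi nA Φ A :=
  Finset.sum_nonneg fun _ _ => mul_nonneg (hPhi _) (hA _)

theorem psi_mul_le (Φ : Matrix (Fin p) (Fin M) ℝ) (A : Matrix (Fin M) (Fin K) ℝ) :
    psi p K nPhi nA M (Φ * A) ≤ ENNReal.ofReal (factorCost nPhi nA Φ A) :=
  iInf₂_le_of_le Φ A (iInf_le_of_le rfl le_rfl)

end Factorization

theorem psi_min_gives_factorized_min_general (p K M : ℕ)
    (nPhi : (Fin p → ℝ) → ℝ) (nA : (Fin K → ℝ) → ℝ)
    (hPhi_add : ∀ x y, nPhi (x + y) ≤ nPhi x + nPhi y)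
    (hPhi_smul : ∀ (c : ℝ) (x), nPhi (c • x) = |c| * nPhi x)
    (hA_add : ∀ x y, nA (x + y) ≤ nA x + nA y)
    (hA_smul : ∀ (c : ℝ) (x), nA (c • x) = |c| * nA x)
    (X : Matrix (Fin p) (Fin K) ℝ) (lam : ℝ) (hlam : 0 < lam)
    (Zs : Matrix (Fin p) (Fin K) ℝ)
    (hZmin : ∀ Z : Matrix (Fin p) (Fin K) ℝ,
      ENNReal.ofReal (∑ i, ∑ k, (X i k - Zs i k) ^ 2) +
          ENNReal.ofReal lam * psi p K nPhi nA M Zs ≤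
        ENNReal.ofReal (∑ i, ∑ k, (X i k - Z i k) ^ 2) +
          ENNReal.ofReal lam * psi p K nPhi nA M Z)
    (Φ : Matrix (Fin p) (Fin M) ℝ) (A : Matrix (Fin M) (Fin K) ℝ)
    (hfact : Φ * A = Zs)
    (hattain : ENNReal.ofReal (∑ m : Fin M, nPhi (fun i => Φ i m) * nA (fun k => A m k)) =
      psi p K nPhi nA M Zs) :
    ∀ (Φ' : Matrix (Fin p) (Fin M) ℝ) (A' : Matrix (Fin M) (Fin K) ℝ),
      (∑ i, ∑ k, (X i k - (Φ * A) i k) ^ 2) +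
          lam * ∑ m : Fin M, nPhi (fun i => Φ i m) * nA (fun k => A m k) ≤
        (∑ i, ∑ k, (X i k - (Φ' * A') i k) ^ 2) +
          lam * ∑ m : Fin M, nPhi (fun i => Φ' i m) * nA (fun k => A' m k) := by
  intro Φ' A'
  have hPhi := nonneg_of_subadditive_of_abs_smul hPhi_add hPhi_smul
  have hA := nonneg_of_subadditive_of_abs_smul hA_add hA_smul
  refine ENNReal.le_of_ofReal_add_mul_le (by positivity) (factorCost_nonneg hPhi hA Φ A)
    (by positivity) (factorCost_nonneg hPhi hA Φ' A') hlam.le ?_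
  calc _ = ENNReal.ofReal (∑ i, ∑ k, (X i k - Zs i k) ^ 2) +
          ENNReal.ofReal lam * psi p K nPhi nA M Zs := by rw [hfact, hattain]
    _ ≤ _ := hZmin (Φ' * A')
    _ ≤ _ := by gcongr; exact psi_mul_le Φ' A'

/-- If `Z*` is a global minimizer of `G(Z) = ‖X − Z‖_F² + λ·ψ^M(Z)` and `(Φ, A)` satisfies
`Φ·A = Z*` with `∑_m n_Φ(Φ_m)·n_A((A_{m,:})ᵀ) = ψ^M(Z*)`, then `(Φ, A)` is a global
minimizer of `F(Φ', A') = ‖X − Φ'A'‖_F² + λ·∑_m n_Φ(Φ'_m)·n_A((A'_{m,:})ᵀ)`. -/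
theorem psi_min_gives_factorized_min (p K M : ℕ)
    (nPhi : (Fin p → ℝ) → ℝ) (nA : (Fin K → ℝ) → ℝ)
    (hPhi_add : ∀ x y, nPhi (x + y) ≤ nPhi x + nPhi y)
    (hPhi_smul : ∀ (c : ℝ) (x), nPhi (c • x) = |c| * nPhi x)
    (hPhi_def : ∀ x, nPhi x = 0 ↔ x = 0)
    (hA_add : ∀ x y, nA (x + y) ≤ nA x + nA y)
    (hA_smul : ∀ (c : ℝ) (x), nA (c • x) = |c| * nA x)
    (hA_def : ∀ x, nA x = 0 ↔ x = 0)
    (X : Matrix (Fin p) (Fin K) ℝ) (lam : ℝ) (hlam : 0 < lam)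
    (Zs : Matrix (Fin p) (Fin K) ℝ)
    (hZmin : ∀ Z : Matrix (Fin p) (Fin K) ℝ,
      ENNReal.ofReal (∑ i, ∑ k, (X i k - Zs i k) ^ 2) +
          ENNReal.ofReal lam * psi p K nPhi nA M Zs ≤
        ENNReal.ofReal (∑ i, ∑ k, (X i k - Z i k) ^ 2) +
          ENNReal.ofReal lam * psi p K nPhi nA M Z)
    (Φ : Matrix (Fin p) (Fin M) ℝ) (A : Matrix (Fin M) (Fin K) ℝ)
    (hfact : Φ * A = Zs)
    (hattain : ENNReal.ofReal (∑ m : Fin M, nPhi (fun i => Φ i m) * nA (fun k => A m k)) =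
      psi p K nPhi nA M Zs) :
    ∀ (Φ' : Matrix (Fin p) (Fin M) ℝ) (A' : Matrix (Fin M) (Fin K) ℝ),
      (∑ i, ∑ k, (X i k - (Φ * A) i k) ^ 2) +
          lam * ∑ m : Fin M, nPhi (fun i => Φ i m) * nA (fun k => A m k) ≤
        (∑ i, ∑ k, (X i k - (Φ' * A') i k) ^ 2) +
          lam * ∑ m : Fin M, nPhi (fun i => Φ' i m) * nA (fun k => A' m k) :=
  psi_min_gives_factorized_min_general p K M nPhi nA hPhi_add hPhi_smul hA_add hA_smul X lam hlam Zs
    hZmin Φ A hfact hattain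
end
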